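/- arXiv:1412.4033 — 3 statements merged into one kernel-verified Lean document; each statement's English description precedes it below -/
import Mathlib

section
/- Let G be an abelian Lie group acting smoothly by isometries on a Riemannian manifold P, and let p₀ ∈ P be a point at which the action is locally free (the evaluation map from the Lie algebra of G to T_{p₀}P is injective). If g₀ ∈ G fixes p₀, then g₀ is a locally isolated period at p₀: there exist a G-invariant open neighborhood P' of p₀ and an open neighborhood G' of g₀ in G such that no element of G' other than g₀ has a fixed point in P'. -/
/-!
If `g₀` were not isolated, there would be periods `gₙ → g₀`, `gₙ ≠ g₀`, of points `qₙ → p₀`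
(a fixed point in the `G`-saturation of a small ball can be translated back into the ball, since
`G` is abelian). As `g₀` fixes `p₀` and `G` acts by isometries, every multiple `m • (gₙ - g₀)`
moves `qₙ` to a point at distance `dist qₙ p₀` from `p₀`. Choosing `m` with
`‖m • (gₙ - g₀)‖ ≈ δ` and passing to a limit in a compact ball gives a period of `p₀` of norm
exactly `δ`, for every `δ > 0`. But local freeness makes the orbit map `g ↦ g +ᵥ p₀` an immersion
at `0`, so `p₀` has no small nonzero periods.
-/

open Manifold Filter Topology Metric Set Pointwise

theorem eventually_ne_of_injective_mfderiv {G E M : Type*} [NormedAddCommGroup G]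
    [NormedSpace ℝ G] [FiniteDimensional ℝ G] [NormedAddCommGroup E] [NormedSpace ℝ E]
    [TopologicalSpace M] [ChartedSpace E M] {f : G → M} {a : G}
    (hf : MDifferentiableAt 𝓘(ℝ, G) 𝓘(ℝ, E) f a)
    (hinj : Function.Injective (mfderiv 𝓘(ℝ, G) 𝓘(ℝ, E) f a)) :
    ∀ᶠ x in 𝓝[≠] a, f x ≠ f a := by
  set D : G →L[ℝ] E := mfderiv 𝓘(ℝ, G) 𝓘(ℝ, E) f a
  have hderiv : HasFDerivAt (extChartAt 𝓘(ℝ, E) (f a) ∘ f) D a := by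
    have h := hf.hasMFDerivAt.2
    simp only [writtenInExtChartAt, extChartAt_model_space_eq_id, PartialEquiv.refl_symm,
      PartialEquiv.refl_coe, Function.comp_id, id, modelWithCornersSelf_coe, range_id] at h
    exact hasFDerivWithinAt_univ.1 h
  obtain ⟨K, -, hK⟩ := (LinearMap.injective_iff_antilipschitz (D : G →ₗ[ℝ] E)).1 hinj
  exact (hderiv.eventually_ne ⟨K, hK⟩).mono fun x hx h => hx (congrArg (extChartAt _ (f a)) h)

theorem exists_nsmul_norm_mem_Icc {G : Type*} [NormedAddCommGroup G] [NormedSpace ℝ G]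
    {ε : G} (hε : ε ≠ 0) {δ : ℝ} (hδ : 0 ≤ δ) : ∃ m : ℕ, ‖m • ε‖ ∈ Icc (δ - ‖ε‖) δ := by
  have hε' : 0 < ‖ε‖ := norm_pos_iff.2 hε
  refine ⟨⌊δ / ‖ε‖⌋₊, ?_, ?_⟩ <;> rw [RCLike.norm_nsmul ℝ, nsmul_eq_mul]
  · have h := Nat.lt_floor_add_one (δ / ‖ε‖)
    rw [div_lt_iff₀ hε'] at h
    linarith
  · exact (le_div_iff₀ hε').1 (Nat.floor_le (div_nonneg hδ hε'.le))

theorem dist_nsmul_sub_vadd_eq {G P : Type*} [AddCommGroup G] [PseudoMetricSpace P]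
    [AddAction G P] [IsIsometricVAdd G P] {g₀ g : G} {p₀ q : P} (hg₀ : g₀ +ᵥ p₀ = p₀)
    (hg : g +ᵥ q = q) (m : ℕ) : dist (m • (g - g₀) +ᵥ q) p₀ = dist q p₀ := by
  have hfix {h : G} {p : P} (hp : h +ᵥ p = p) : m • h +ᵥ p = p :=
    AddAction.mem_stabilizer_iff.1 (nsmul_mem (AddAction.mem_stabilizer_iff.2 hp) m)
  calc dist (m • (g - g₀) +ᵥ q) p₀
      = dist (m • g₀ +ᵥ (m • (g - g₀) +ᵥ q)) (m • g₀ +ᵥ p₀) := (dist_vadd _ _ _).symm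
    _ = dist q p₀ := by rw [vadd_vadd, ← nsmul_add, add_sub_cancel, hfix hg, hfix hg₀]

section IsolatedPeriod

variable {G P : Type*} [NormedAddCommGroup G] [NormedSpace ℝ G] [ProperSpace G] [MetricSpace P]
  [AddAction G P] [IsIsometricVAdd G P] [ContinuousVAdd G P]

theorem exists_norm_eq_vadd_eq_self_of_tendsto {g₀ : G} {p₀ : P} (hg₀ : g₀ +ᵥ p₀ = p₀)
    {g : ℕ → G} {q : ℕ → P} (hg : Tendsto g atTop (𝓝 g₀)) (hne : ∀ n, g n ≠ g₀)
    (hq : Tendsto q atTop (𝓝 p₀)) (hfix : ∀ n, g n +ᵥ q n = q n) {δ : ℝ} (hδ : 0 ≤ δ) :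
    ∃ t : G, ‖t‖ = δ ∧ t +ᵥ p₀ = p₀ := by
  choose m hm using fun n => exists_nsmul_norm_mem_Icc (sub_ne_zero.2 (hne n)) hδ
  set t : ℕ → G := fun n => m n • (g n - g₀)
  have ht_norm : Tendsto (fun n => ‖t n‖) atTop (𝓝 δ) := by
    have hlow : Tendsto (fun n => δ - ‖g n - g₀‖) atTop (𝓝 δ) := by
      simpa using tendsto_const_nhds.sub (tendsto_iff_norm_sub_tendsto_zero.1 hg)
    exact tendsto_of_tendsto_of_tendsto_of_le_of_le hlow tendsto_const_nhds
      (fun n => (hm n).1) (fun n => (hm n).2)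
  have ht_vadd : Tendsto (fun n => t n +ᵥ q n) atTop (𝓝 p₀) := by
    rw [tendsto_iff_dist_tendsto_zero] at hq ⊢
    simpa only [t, dist_nsmul_sub_vadd_eq hg₀ (hfix _)] using hq
  obtain ⟨t₀, -, φ, hφ, htφ⟩ := tendsto_subseq_of_bounded isBounded_closedBall
    (fun n => mem_closedBall_zero_iff.2 (hm n).2)
  have hφ' := hφ.tendsto_atTop
  exact ⟨t₀, tendsto_nhds_unique htφ.norm (ht_norm.comp hφ'),
    tendsto_nhds_unique (htφ.vadd (hq.comp hφ')) (ht_vadd.comp hφ')⟩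

theorem exists_pos_forall_ball_vadd_ne_self {p₀ : P}
    (hdisc : ∀ᶠ t in 𝓝[≠] (0 : G), t +ᵥ p₀ ≠ p₀) {g₀ : G} (hg₀ : g₀ +ᵥ p₀ = p₀) :
    ∃ ε > 0, ∀ g ∈ ball g₀ ε, g ≠ g₀ → ∀ q ∈ ball p₀ ε, g +ᵥ q ≠ q := by
  obtain ⟨r, hr, hball⟩ := Metric.mem_nhdsWithin_iff.1 hdisc
  by_contra! h
  choose g hg hne q hq hfix using fun n : ℕ => h (1 / ((n : ℝ) + 1)) Nat.one_div_pos_of_nat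
  have hg_lim : Tendsto g atTop (𝓝 g₀) := tendsto_iff_dist_tendsto_zero.2 <|
    squeeze_zero (fun _ => dist_nonneg) (fun n => (hg n).le) tendsto_one_div_add_atTop_nhds_zero_nat
  have hq_lim : Tendsto q atTop (𝓝 p₀) := tendsto_iff_dist_tendsto_zero.2 <|
    squeeze_zero (fun _ => dist_nonneg) (fun n => (hq n).le) tendsto_one_div_add_atTop_nhds_zero_nat
  obtain ⟨t, ht, htfix⟩ :=
    exists_norm_eq_vadd_eq_self_of_tendsto hg₀ hg_lim hne hq_lim hfix (half_pos hr).le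
  exact hball ⟨mem_ball_zero_iff.2 (by linarith), norm_ne_zero_iff.1 (by linarith)⟩ htfix

end IsolatedPeriod

theorem stmt2_general {G : Type*} [NormedAddCommGroup G] [NormedSpace ℝ G] [FiniteDimensional ℝ G]
    {E : Type*} [NormedAddCommGroup E] [NormedSpace ℝ E]
    {P : Type*} [MetricSpace P] [ChartedSpace E P]
    (μ : G → P → P)
    (hsmooth : ContMDiff ((modelWithCornersSelf ℝ G).prod (modelWithCornersSelf ℝ E))
      (modelWithCornersSelf ℝ E) (⊤ : ℕ∞) (fun q : G × P => μ q.1 q.2))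
    (hzero : ∀ p, μ 0 p = p)
    (hadd : ∀ g h p, μ (g + h) p = μ g (μ h p))
    (hisom : ∀ g, Isometry (μ g))
    (p₀ : P)
    (hfree : ∀ ξ : G, ξ ≠ 0 →
      mfderiv (modelWithCornersSelf ℝ G) (modelWithCornersSelf ℝ E)
        (fun g => μ g p₀) 0 ξ ≠ 0)
    (g₀ : G) (hfix : μ g₀ p₀ = p₀) :
    ∃ P' : Set P, IsOpen P' ∧ p₀ ∈ P' ∧ (∀ g, μ g '' P' ⊆ P') ∧
      ∃ G' : Set G, IsOpen G' ∧ g₀ ∈ G' ∧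
        ∀ g ∈ G', g ≠ g₀ → ∀ p ∈ P', μ g p ≠ p := by
  let _ : AddAction G P := { vadd := μ, zero_vadd := hzero, add_vadd := hadd }
  have _ : ContinuousVAdd G P := ⟨hsmooth.continuous⟩
  have _ : IsIsometricVAdd G P := ⟨hisom⟩
  have hdisc : ∀ᶠ t in 𝓝[≠] (0 : G), t +ᵥ p₀ ≠ p₀ := by
    have horbit : MDifferentiableAt 𝓘(ℝ, G) 𝓘(ℝ, E) (fun g => μ g p₀) 0 :=
      (hsmooth.comp (contMDiff_id.prodMk contMDiff_const)).mdifferentiableAt (by simp)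
    have h := eventually_ne_of_injective_mfderiv horbit
      ((injective_iff_map_eq_zero _).2 fun ξ hξ => by_contra fun hne => hfree ξ hne hξ)
    rw [hzero] at h
    exact h
  obtain ⟨ε, hε, hisolated⟩ := exists_pos_forall_ball_vadd_ne_self hdisc hfix
  refine ⟨(univ : Set G) +ᵥ ball p₀ ε, isOpen_ball.vadd_left,
    ⟨0, trivial, p₀, mem_ball_self hε, hzero p₀⟩, ?_, ball g₀ ε, isOpen_ball, mem_ball_self hε, ?_⟩
  · rintro g _ ⟨_, ⟨h, -, q, hq, rfl⟩, rfl⟩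
    exact ⟨g + h, trivial, q, hq, hadd g h q⟩
  · rintro g hg hne _ ⟨h, -, q, hq, rfl⟩ hgq
    refine hisolated g hg hne q hq (vadd_left_cancel h ?_)
    rwa [vadd_vadd, add_comm, ← vadd_vadd]

/-- Let the abelian Lie group `G` (here a finite-dimensional real vector
group, with Lie algebra `G` itself) act smoothly by isometries on a Riemannian manifold
`P` (a smooth manifold equipped with a metric), via `μ`. If the action is locally free
at `p₀` (the evaluation map `ξ ↦ ξ_P(p₀)` on the Lie algebra is injective, i.e. the
derivative at `0` of `g ↦ μ g p₀` has trivial kernel) and `g₀` fixes `p₀`, then `g₀` is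
a locally isolated period at `p₀`: there are a `G`-invariant open neighborhood `P'` of
`p₀` and an open neighborhood `G'` of `g₀` such that no `g ∈ G'` other than `g₀` has a
fixed point in `P'`. -/
theorem stmt2 {G : Type*} [NormedAddCommGroup G] [NormedSpace ℝ G] [FiniteDimensional ℝ G]
    {E : Type*} [NormedAddCommGroup E] [NormedSpace ℝ E] [FiniteDimensional ℝ E]
    {P : Type*} [MetricSpace P] [ChartedSpace E P]
    [IsManifold (modelWithCornersSelf ℝ E) (⊤ : ℕ∞) P]
    (μ : G → P → P)
    (hsmooth : ContMDiff ((modelWithCornersSelf ℝ G).prod (modelWithCornersSelf ℝ E))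
      (modelWithCornersSelf ℝ E) (⊤ : ℕ∞) (fun q : G × P => μ q.1 q.2))
    (hzero : ∀ p, μ 0 p = p)
    (hadd : ∀ g h p, μ (g + h) p = μ g (μ h p))
    (hisom : ∀ g, Isometry (μ g))
    (p₀ : P)
    (hfree : ∀ ξ : G, ξ ≠ 0 →
      mfderiv (modelWithCornersSelf ℝ G) (modelWithCornersSelf ℝ E)
        (fun g => μ g p₀) 0 ξ ≠ 0)
    (g₀ : G) (hfix : μ g₀ p₀ = p₀) :
    ∃ P' : Set P, IsOpen P' ∧ p₀ ∈ P' ∧ (∀ g, μ g '' P' ⊆ P') ∧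
      ∃ G' : Set G, IsOpen G' ∧ g₀ ∈ G' ∧
        ∀ g ∈ G', g ≠ g₀ → ∀ p ∈ P', μ g p ≠ p :=
  stmt2_general μ hsmooth hzero hadd hisom p₀ hfree g₀ hfix
end

section
/- For an r×1 unit vector β = Φ(m)/‖Φ(m)‖ ∈ ℝ^r with Φ(m) ≠ 0, suppose L : ℝ^r → ℝ^r ⊗ ℂ is a linear map of the form L(ξ)(τ) = ⟨Tτ, Tξ⟩ for an injective linear map T defined on ker Φ(m), and suppose the complex span of Φ(m) intersects the complexification of the space {L(ξ) : ξ ∈ ker Φ(m)} only in 0. Then there exists a constant a > 0 such that for all ξ ∈ ker Φ(m), all t ∈ ℝ and all ϑ ∈ ℝ: ‖e^{iϑ}·t·Φ(m) - β + e^{iϑ}L(ξ)‖ ≥ a‖ξ‖. -/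
open scoped RealInnerProductSpace

/-!
Pair the vector `v = e^{iϑ} t Φm - β + e^{iϑ} L ξ` with the complexification of `ξ`. Since
`ξ ⊥ Φm`, the first two terms drop out and `⟪ξ, L ξ⟫ = ‖T ξ‖²`, so `⟪c ξ, v⟫ = e^{iϑ} ‖T ξ‖²`.
Cauchy–Schwarz gives `‖T ξ‖² ≤ ‖ξ‖ ‖v‖`, and an injective linear map on a finite-dimensional
space is bounded below, `a ‖ξ‖ ≤ ‖T ξ‖`; hence `a² ‖ξ‖ ≤ ‖v‖`.
-/

section Complexification

variable {ι : Type*} [Fintype ι] {c : EuclideanSpace ℝ ι → EuclideanSpace ℂ ι}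

theorem inner_complexification (hc : ∀ v i, c v i = (v i : ℂ)) (x y : EuclideanSpace ℝ ι) :
    inner ℂ (c x) (c y) = ((⟪x, y⟫ : ℝ) : ℂ) := by
  simp [PiLp.inner_apply, hc, Complex.ofReal_sum]

theorem norm_complexification (hc : ∀ v i, c v i = (v i : ℂ)) (x : EuclideanSpace ℝ ι) :
    ‖c x‖ = ‖x‖ := by
  simp [EuclideanSpace.norm_eq, hc]

end Complexification

theorem stmt9_general {r : ℕ} (Φm : EuclideanSpace ℝ (Fin r))
    (c : EuclideanSpace ℝ (Fin r) →ₗ[ℝ] EuclideanSpace ℂ (Fin r))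
    (hc : ∀ (v : EuclideanSpace ℝ (Fin r)) (i : Fin r), c v i = (v i : ℂ))
    {F : Type*} [NormedAddCommGroup F] [InnerProductSpace ℝ F]
    (T : ((Submodule.span ℝ {Φm})ᗮ : Submodule ℝ (EuclideanSpace ℝ (Fin r))) →ₗ[ℝ] F)
    (hT : Function.Injective T)
    (L : ((Submodule.span ℝ {Φm})ᗮ : Submodule ℝ (EuclideanSpace ℝ (Fin r))) →ₗ[ℝ]
      EuclideanSpace ℝ (Fin r))
    (hL : ∀ ξ τ : ((Submodule.span ℝ {Φm})ᗮ : Submodule ℝ (EuclideanSpace ℝ (Fin r))),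
      ⟪L ξ, (τ : EuclideanSpace ℝ (Fin r))⟫ = ⟪T τ, T ξ⟫) :
    ∃ a > 0, ∀ ξ : ((Submodule.span ℝ {Φm})ᗮ : Submodule ℝ (EuclideanSpace ℝ (Fin r))),
      ∀ t ϑ : ℝ,
        a * ‖ξ‖ ≤ ‖(Complex.exp (ϑ * Complex.I) * t) • c Φm - c (‖Φm‖⁻¹ • Φm)
          + Complex.exp (ϑ * Complex.I) • c (L ξ)‖ := by
  obtain ⟨a, ha, hTa⟩ := antilipschitzWith_iff_exists_mul_le_norm.1
    ((T.injective_iff_antilipschitz.1 hT).imp fun _ hK ↦ hK.2)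
  refine ⟨a ^ 2, by positivity, fun ξ t ϑ ↦ ?_⟩
  set e := Complex.exp (ϑ * Complex.I)
  set v := (e * t) • c Φm - c (‖Φm‖⁻¹ • Φm) + e • c (L ξ)
  have hξΦ : ⟪(ξ : EuclideanSpace ℝ (Fin r)), Φm⟫ = 0 :=
    Submodule.mem_orthogonal_singleton_iff_inner_left.1 ξ.2
  have hLξ : ⟪(ξ : EuclideanSpace ℝ (Fin r)), L ξ⟫ = ‖T ξ‖ ^ 2 := by
    rw [real_inner_comm, hL, real_inner_self_eq_norm_sq]
  have hpair : inner ℂ (c ξ) v = e * (‖T ξ‖ ^ 2 : ℝ) := by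
    simp only [v, inner_add_right, inner_sub_right, inner_smul_right, inner_complexification hc,
      hξΦ, hLξ]
    simp
  have hCS : ‖T ξ‖ ^ 2 ≤ ‖ξ‖ * ‖v‖ := calc
    ‖T ξ‖ ^ 2 = ‖inner ℂ (c ξ) v‖ := by
      rw [hpair, norm_mul, Complex.norm_exp_ofReal_mul_I, one_mul, Complex.norm_real,
        Real.norm_of_nonneg (by positivity)]
    _ ≤ ‖c ξ‖ * ‖v‖ := norm_inner_le_norm _ _
    _ = ‖ξ‖ * ‖v‖ := by rw [norm_complexification hc]; rfl
  rcases (norm_nonneg ξ).eq_or_lt with h0 | hξ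
  · rw [← h0, mul_zero]
    exact norm_nonneg _
  · refine le_of_mul_le_mul_left ?_ hξ
    calc ‖ξ‖ * (a ^ 2 * ‖ξ‖) = (a * ‖ξ‖) ^ 2 := by ring
      _ ≤ ‖T ξ‖ ^ 2 := pow_le_pow_left₀ (by positivity) (hTa ξ) 2
      _ ≤ ‖ξ‖ * ‖v‖ := hCS

/-- Let `Φm ∈ ℝ^r` be nonzero, `β = Φm/‖Φm‖`, and let
`c : ℝ^r → ℂ^r` be the coordinatewise complexification.  Let `L` be a linear map on
`ker Φm = (span{Φm})ᗮ` with values in `(ℝ^r)^∨ ≅ ℝ^r` of the form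
`⟨L ξ, τ⟩ = ⟨T τ, T ξ⟩` for an injective linear `T`, and suppose the complex span of
`Φm` meets the complexification of `{L ξ}` only in `0`.  Then there is `a > 0` such
that for all `ξ ∈ ker Φm`, `t ∈ ℝ`, `ϑ ∈ ℝ`:
`‖e^{iϑ} t Φm - β + e^{iϑ} L ξ‖ ≥ a ‖ξ‖`. -/
theorem stmt9 {r : ℕ} (Φm : EuclideanSpace ℝ (Fin r)) (hΦm : Φm ≠ 0)
    (c : EuclideanSpace ℝ (Fin r) →ₗ[ℝ] EuclideanSpace ℂ (Fin r))
    (hc : ∀ (v : EuclideanSpace ℝ (Fin r)) (i : Fin r), c v i = (v i : ℂ))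
    {F : Type*} [NormedAddCommGroup F] [InnerProductSpace ℝ F]
    (T : ((Submodule.span ℝ {Φm})ᗮ : Submodule ℝ (EuclideanSpace ℝ (Fin r))) →ₗ[ℝ] F)
    (hT : Function.Injective T)
    (L : ((Submodule.span ℝ {Φm})ᗮ : Submodule ℝ (EuclideanSpace ℝ (Fin r))) →ₗ[ℝ]
      EuclideanSpace ℝ (Fin r))
    (hL : ∀ ξ τ : ((Submodule.span ℝ {Φm})ᗮ : Submodule ℝ (EuclideanSpace ℝ (Fin r))),
      ⟪L ξ, (τ : EuclideanSpace ℝ (Fin r))⟫ = ⟪T τ, T ξ⟫)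
    (hspan : Submodule.span ℂ {c Φm} ⊓
      Submodule.span ℂ (c '' Set.range (fun ξ => L ξ)) = ⊥) :
    ∃ a > 0, ∀ ξ : ((Submodule.span ℝ {Φm})ᗮ : Submodule ℝ (EuclideanSpace ℝ (Fin r))),
      ∀ t ϑ : ℝ,
        a * ‖ξ‖ ≤ ‖(Complex.exp (ϑ * Complex.I) * t) • c Φm - c (‖Φm‖⁻¹ • Φm)
          + Complex.exp (ϑ * Complex.I) • c (L ξ)‖ :=
  stmt9_general Φm c hc T hT L hL
end

section
/- Let A' be a c×c unitary complex matrix with no eigenvalue equal to 1, and define ψ₂(v,w) = -i·Im⟨v,w⟩ - ½‖v-w‖² on ℂ^c (with the standard Hermitian inner product, ω₀(v,w)=Im⟨v,w⟩). Then the Gaussian integral ∫_{ℂ^c} exp(ψ₂(A'u, u)) du (with respect to Lebesgue measure on ℂ^c ≅ ℝ^{2c}) converges and equals π^c / det(I_c - A'). -/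
/-!
Since `A'` is an isometry, `ψ₂(A'u, u) = -⟪u, (1 - A')u⟫`. The Cayley transform
`i (1 - A')⁻¹ (1 + A')` is Hermitian, so an orthonormal eigenbasis for it is also one for `A'`,
with eigenvalues `ζⱼ` on the unit circle and different from `1`. In these coordinates the
integrand is `exp (-∑ⱼ (1 - ζⱼ) |yⱼ|²)` with `Re (1 - ζⱼ) > 0`, a product of one-dimensional
complex Gaussians, each contributing `π / (1 - ζⱼ)`; and `∏ⱼ (1 - ζⱼ) = det (1 - A')`.
-/

open Complex MeasureTheory Matrix
open scoped Real

theorem LinearMap.det_eq_prod_of_apply_eq_smul {R M ι : Type*} [CommRing R] [AddCommGroup M]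
    [Module R M] [Fintype ι] [DecidableEq ι] (b : Module.Basis ι R M) {f : M →ₗ[R] M}
    {μ : ι → R} (hf : ∀ i, f (b i) = μ i • b i) : LinearMap.det f = ∏ i, μ i := by
  have : LinearMap.toMatrix b b f = diagonal μ := by
    ext i j
    rcases eq_or_ne i j with rfl | h <;> simp [LinearMap.toMatrix_apply, *]
  rw [← LinearMap.det_toMatrix b, this, det_diagonal]

def LinearIsometryEquiv.restrictScalars (R : Type*) {S E F : Type*} [Semiring R] [Semiring S]
    [SeminormedAddCommGroup E] [SeminormedAddCommGroup F] [Module R E] [Module R F]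
    [Module S E] [Module S F] [LinearMap.CompatibleSMul E F R S] (f : E ≃ₗᵢ[S] F) :
    E ≃ₗᵢ[R] F :=
  ⟨f.toLinearEquiv.restrictScalars R, f.norm_map⟩

section OrthonormalBasis

variable {𝕜 E ι : Type*} [RCLike 𝕜] [NormedAddCommGroup E] [InnerProductSpace 𝕜 E] [Fintype ι]
  (b : OrthonormalBasis ι 𝕜 E) {f : E →ₗ[𝕜] E} {μ : ι → 𝕜}

theorem OrthonormalBasis.repr_apply_eq_mul_of_apply_eq_smul (hf : ∀ i, f (b i) = μ i • b i)
    (v : E) (i : ι) : b.repr (f v) i = μ i * b.repr v i := by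
  classical
  conv_lhs => rw [← b.sum_repr v]
  simp [hf, Pi.single_apply, mul_comm]

theorem OrthonormalBasis.inner_apply_self_eq_sum (hf : ∀ i, f (b i) = μ i • b i) (v : E) :
    inner 𝕜 v (f v) = ∑ i, μ i * ‖b.repr v i‖ ^ 2 := by
  rw [← b.repr.inner_map_map, PiLp.inner_apply]
  refine Finset.sum_congr rfl fun i _ => ?_
  rw [b.repr_apply_eq_mul_of_apply_eq_smul hf, RCLike.inner_apply, mul_assoc, RCLike.mul_conj]

end OrthonormalBasis

theorem neg_inner_sub_eq_of_norm_eq {E : Type*} [NormedAddCommGroup E] [InnerProductSpace ℂ E]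
    {u v : E} (h : ‖v‖ = ‖u‖) :
    -inner ℂ u (u - v) = -I * ((inner ℂ v u).im : ℂ) - ((‖v - u‖ ^ 2 / 2 : ℝ) : ℂ) := by
  have hsub : ‖v - u‖ ^ 2 = 2 * ‖u‖ ^ 2 - 2 * (inner ℂ v u).re := by
    rw [@norm_sub_sq ℂ, h, RCLike.re_to_complex]
    ring
  have hself : inner ℂ u u = ((‖u‖ ^ 2 : ℝ) : ℂ) := by
    exact_mod_cast inner_self_eq_norm_sq_to_K u
  rw [inner_sub_right, hself, hsub, ← inner_conj_symm u v]
  apply Complex.ext <;> simp only [neg_re, neg_im, sub_re, sub_im, mul_re, mul_im, I_re, I_im,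
    ofReal_re, ofReal_im, conj_re, conj_im] <;> ring

theorem Complex.zero_lt_re_one_sub {ζ : ℂ} (hnorm : ‖ζ‖ = 1) (hne : ζ ≠ 1) : 0 < (1 - ζ).re := by
  have hle : ζ.re ≤ 1 := hnorm ▸ re_le_norm ζ
  have hre : ζ.re ≠ 1 := fun h => hne <| by
    have him := (nonneg_iff.mp (re_eq_norm.mp (h.trans hnorm.symm))).2
    exact Complex.ext h him.symm
  rw [sub_re, one_re]
  exact sub_pos.mpr (lt_of_le_of_ne hle hre)

namespace Matrix

variable {n : Type*} [Fintype n] [DecidableEq n] {A : Matrix n n ℂ}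

noncomputable def cayleyTransform (A : Matrix n n ℂ) : Matrix n n ℂ := I • (1 - A)⁻¹ * (1 + A)

theorem one_sub_mul_cayleyTransform (h : IsUnit (1 - A).det) :
    (1 - A) * cayleyTransform A = I • (1 + A) := by
  rw [cayleyTransform, smul_mul_assoc, mul_smul_comm, ← Matrix.mul_assoc, mul_nonsing_inv _ h,
    Matrix.one_mul]

theorem cayleyTransform_mul_one_sub (h : IsUnit (1 - A).det) :
    cayleyTransform A * (1 - A) = I • (1 + A) := by
  have hcomm : (1 + A) * (1 - A) = (1 - A) * (1 + A) := by noncomm_ring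
  rw [cayleyTransform, smul_mul_assoc, smul_mul_assoc, Matrix.mul_assoc, hcomm,
    ← Matrix.mul_assoc, nonsing_inv_mul _ h, Matrix.one_mul]

theorem isHermitian_cayleyTransform (hA : A ∈ unitaryGroup n ℂ) (h : IsUnit (1 - A).det) :
    (cayleyTransform A).IsHermitian := by
  have hAA : Aᴴ * A = 1 := by
    simpa [star_eq_conjTranspose] using (mem_unitaryGroup_iff').mp hA
  have hstar : (1 - A)ᴴ = -(Aᴴ * (1 - A)) := by
    rw [conjTranspose_sub, conjTranspose_one, Matrix.mul_sub, Matrix.mul_one, hAA, neg_sub]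
  have hunit : IsUnit (1 - A)ᴴ := by
    rw [isUnit_iff_isUnit_det, det_conjTranspose]
    exact h.star
  refine hunit.mul_left_cancel ?_
  calc (1 - A)ᴴ * (cayleyTransform A)ᴴ = (I • (1 + A))ᴴ := by
        rw [← conjTranspose_mul, cayleyTransform_mul_one_sub h]
    _ = -(Aᴴ * (I • (1 + A))) := by
        rw [conjTranspose_smul, conjTranspose_add, conjTranspose_one, mul_smul_comm,
          Matrix.mul_add, Matrix.mul_one, hAA, star_def, conj_I, neg_smul, add_comm]
    _ = (1 - A)ᴴ * cayleyTransform A := by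
        rw [hstar, neg_mul, Matrix.mul_assoc, one_sub_mul_cayleyTransform h]

theorem mulVec_eq_smul_of_cayleyTransform_mulVec_eq_smul (h : IsUnit (1 - A).det)
    {v : n → ℂ} {d : ℂ} (hd : d + I ≠ 0) (hv : cayleyTransform A *ᵥ v = d • v) :
    A *ᵥ v = ((d - I) / (d + I)) • v := by
  have key : (d + I) • (A *ᵥ v) = (d - I) • v := by
    have := congrArg ((1 - A) *ᵥ ·) hv
    simp only [mulVec_mulVec, one_sub_mul_cayleyTransform h, smul_mulVec, add_mulVec,
      sub_mulVec, one_mulVec, mulVec_smul] at this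
    linear_combination (norm := module) this
  rw [div_eq_inv_mul, mul_smul, ← key, smul_smul, inv_mul_cancel₀ hd, one_smul]

theorem exists_orthonormalBasis_toEuclideanLin_apply_eq_smul (hA : A ∈ unitaryGroup n ℂ)
    (h : IsUnit (1 - A).det) :
    ∃ (b : OrthonormalBasis n ℂ (EuclideanSpace ℂ n)) (ζ : n → ℂ),
      ∀ j, toEuclideanLin A (b j) = ζ j • b j := by
  have hH := isHermitian_cayleyTransform hA h
  refine ⟨hH.eigenvectorBasis, fun j => (hH.eigenvalues j - I) / (hH.eigenvalues j + I),
    fun j => WithLp.ofLp_injective 2 ?_⟩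
  have hd : (hH.eigenvalues j : ℂ) + I ≠ 0 := fun h0 => by simpa using congrArg im h0
  rw [ofLp_toLpLin, WithLp.ofLp_smul]
  refine mulVec_eq_smul_of_cayleyTransform_mulVec_eq_smul h hd ?_
  rw [hH.mulVec_eigenvectorBasis, RCLike.real_smul_eq_coe_smul (K := ℂ)]
  rfl

theorem norm_toEuclideanLin_of_mem_unitaryGroup (hA : A ∈ unitaryGroup n ℂ)
    (v : EuclideanSpace ℂ n) : ‖toEuclideanLin A v‖ = ‖v‖ :=
  ContinuousLinearMap.norm_map_of_mem_unitary
    (Unitary.map_mem (toEuclideanCLM (n := n) (𝕜 := ℂ)) hA) v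

section Eigenbasis

variable {ζ : n → ℂ}

theorem toEuclideanLin_one_sub_apply_eq_smul {b : n → EuclideanSpace ℂ n}
    (hb : ∀ j, toEuclideanLin A (b j) = ζ j • b j) (j : n) :
    toEuclideanLin (1 - A) (b j) = (1 - ζ j) • b j := by
  simp [hb, sub_smul]

theorem det_one_sub_eq_prod_of_toEuclideanLin_apply_eq_smul
    (b : Module.Basis n ℂ (EuclideanSpace ℂ n)) (hb : ∀ j, toEuclideanLin A (b j) = ζ j • b j) :
    (1 - A).det = ∏ j, (1 - ζ j) := by
  rw [← LinearMap.det_toLpLin 2,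
    LinearMap.det_eq_prod_of_apply_eq_smul b (toEuclideanLin_one_sub_apply_eq_smul hb)]

theorem inner_sub_toEuclideanLin_self_eq_sum (b : OrthonormalBasis n ℂ (EuclideanSpace ℂ n))
    (hb : ∀ j, toEuclideanLin A (b j) = ζ j • b j) (u : EuclideanSpace ℂ n) :
    inner ℂ u (u - toEuclideanLin A u) = ∑ j, (1 - ζ j) * ‖b.repr u j‖ ^ 2 := by
  have hsub : u - toEuclideanLin A u = toEuclideanLin (1 - A) u := by simp
  rw [hsub]
  exact b.inner_apply_self_eq_sum (toEuclideanLin_one_sub_apply_eq_smul hb) u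

end Eigenbasis

end Matrix

section Gaussian

variable {ι : Type*} [Fintype ι]

theorem norm_sq_repr_symm_piOrthonormalBasisOneI (y : EuclideanSpace ℝ ((_ : ι) × Fin 2))
    (i : ι) :
    ‖((Pi.orthonormalBasis fun _ : ι => orthonormalBasisOneI).repr.symm y) i‖ ^ 2
      = ∑ k, y ⟨i, k⟩ ^ 2 := by
  simp [Pi.orthonormalBasis, ← normSq_eq_norm_sq, normSq_add_mul_I, Sigma.curry]

theorem integrable_and_integral_cexp_neg_sum_mul_norm_sq {μ : ι → ℂ}
    (hμ : ∀ i, 0 < (μ i).re) :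
    Integrable (fun z : EuclideanSpace ℂ ι => cexp (-∑ i, μ i * ‖z i‖ ^ 2)) ∧
      ∫ z : EuclideanSpace ℂ ι, cexp (-∑ i, μ i * ‖z i‖ ^ 2) = ∏ i, π / μ i := by
  set P := Pi.orthonormalBasis fun _ : ι => orthonormalBasisOneI
  set Φ := (MeasurableEquiv.toLp 2 (((_ : ι) × Fin 2) → ℝ)).trans P.measurableEquiv.symm
  have hΦ : MeasurePreserving Φ :=
    P.measurePreserving_measurableEquiv.symm.comp
      (EuclideanSpace.volume_preserving_symm_measurableEquiv_toLp _).symm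
  have hcoord : ∀ y, cexp (-∑ i, μ i * ‖Φ y i‖ ^ 2)
      = cexp (-∑ s : (_ : ι) × Fin 2, μ s.1 * (y s : ℂ) ^ 2) := by
    intro y
    have hΦy : Φ y = P.repr.symm (WithLp.toLp 2 y) := rfl
    simp only [Fintype.sum_sigma, ← Finset.mul_sum, hΦy]
    congr 2
    refine Finset.sum_congr rfl fun i _ => congrArg (μ i * ·) ?_
    exact_mod_cast norm_sq_repr_symm_piOrthonormalBasisOneI (WithLp.toLp 2 y) i
  have hμ' : ∀ s : (_ : ι) × Fin 2, 0 < (μ s.1).re := fun s => hμ s.1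
  constructor
  · rw [← hΦ.integrable_comp_emb Φ.measurableEmbedding]
    simpa [Function.comp_def, hcoord] using
      GaussianFourier.integrable_cexp_neg_sum_mul_add hμ' 0
  · rw [← hΦ.integral_comp', funext hcoord]
    simpa [Fintype.prod_sigma, ← cpow_nat_mul] using
      GaussianFourier.integral_cexp_neg_sum_mul_add hμ' 0

end Gaussian

/-- Let `A'` be a `c×c` unitary matrix with no eigenvalue `1`, and let
`ψ₂(v,w) = -i Im⟨v,w⟩ - ½‖v-w‖²` on `ℂ^c`.  Then the Gaussian integral
`∫_{ℂ^c} exp(ψ₂(A'u, u)) du` (Lebesgue measure on `ℂ^c ≅ ℝ^{2c}`, transported by any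
real-linear isometry `e`) converges and equals `π^c / det(I - A')`. -/
theorem stmt14 {c : ℕ} (A' : Matrix (Fin c) (Fin c) ℂ)
    (hA' : A' ∈ Matrix.unitaryGroup (Fin c) ℂ)
    (hdet : (1 - A').det ≠ 0)
    (ψ₂ : EuclideanSpace ℂ (Fin c) → EuclideanSpace ℂ (Fin c) → ℂ)
    (hψ : ∀ v w, ψ₂ v w
      = -Complex.I * (((inner ℂ v w : ℂ).im : ℝ) : ℂ) - ((‖v - w‖ ^ 2 / 2 : ℝ) : ℂ))
    (e : EuclideanSpace ℂ (Fin c) ≃ₗᵢ[ℝ] EuclideanSpace ℝ (Fin (2 * c))) :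
    MeasureTheory.Integrable (fun x : EuclideanSpace ℝ (Fin (2 * c)) =>
      Complex.exp (ψ₂ (Matrix.toEuclideanLin A' (e.symm x)) (e.symm x))) ∧
    ∫ x : EuclideanSpace ℝ (Fin (2 * c)),
        Complex.exp (ψ₂ (Matrix.toEuclideanLin A' (e.symm x)) (e.symm x))
      = ((π : ℂ) ^ c) / (1 - A').det := by
  obtain ⟨b, ζ, hb⟩ := exists_orthonormalBasis_toEuclideanLin_apply_eq_smul hA' hdet.isUnit
  have hdet_eq : (1 - A').det = ∏ j, (1 - ζ j) :=
    det_one_sub_eq_prod_of_toEuclideanLin_apply_eq_smul b.toBasis (by simpa using hb)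
  have hre : ∀ j, 0 < (1 - ζ j).re := fun j => by
    refine zero_lt_re_one_sub ?_ fun h => hdet ?_
    · simpa [hb, norm_smul] using norm_toEuclideanLin_of_mem_unitaryGroup hA' (b j)
    · exact hdet_eq ▸ Finset.prod_eq_zero (Finset.mem_univ j) (by rw [h, sub_self])
  let L := e.symm.trans (b.repr.restrictScalars ℝ)
  have hpt : ∀ x, cexp (ψ₂ (toEuclideanLin A' (e.symm x)) (e.symm x))
      = cexp (-∑ j, (1 - ζ j) * ‖L x j‖ ^ 2) := fun x => by
    rw [hψ, ← neg_inner_sub_eq_of_norm_eq (norm_toEuclideanLin_of_mem_unitaryGroup hA' _),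
      inner_sub_toEuclideanLin_self_eq_sum b hb]
    rfl
  obtain ⟨hint, hval⟩ := integrable_and_integral_cexp_neg_sum_mul_norm_sq hre
  have hL : MeasurePreserving L.toMeasurableEquiv := L.measurePreserving
  simp_rw [hpt]
  refine ⟨(hL.integrable_comp_emb L.toMeasurableEquiv.measurableEmbedding).mpr hint,
    (hL.integral_comp' fun z => cexp (-∑ j, (1 - ζ j) * ‖z j‖ ^ 2)).trans ?_⟩
  rw [hval, Finset.prod_div_distrib, Finset.prod_const, Finset.card_univ, Fintype.card_fin,
    hdet_eq]
end
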